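/- arXiv:2205.07808 — 8 statements merged into one kernel-verified Lean document; each statement's English description precedes it below -/
import Mathlib

section
/- For every count expression e, the minimum of eval(e) equals the natural number obtained by evaluating e with each leaf set X replaced by the number min X, each ⊗ node interpreted as addition of natural numbers, and each ⊕ node interpreted as binary minimum. (Consequently, for a requirement with exist count_exp where count_exp is ≥ N or > N, it suffices for each node of DVNet to propagate only the minimum of its counting set to its upstream neighbors: this is the sufficiency half of Proposition 1 for these cases.) -/
open Pointwise

/-- A count expression: a finite binary tree whose leaves are labeled by nonempty finite
sets of natural numbers and whose internal nodes are labeled either `⊗` or `⊕`. -/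
inductive CExpr : Type where
  | leaf : (X : Finset ℕ) → X.Nonempty → CExpr
  | otimes : CExpr → CExpr → CExpr
  | oplus : CExpr → CExpr → CExpr

/-- The value of a count expression: `⊗` is interpreted as the sumset operation
`A ⊗ B = {a + b | a ∈ A, b ∈ B}` and `⊕` as set union. -/
def CExpr.eval : CExpr → Finset ℕ
  | .leaf X _ => X
  | .otimes l r => l.eval + r.eval
  | .oplus l r => l.eval ∪ r.eval

/-- The value of a count expression is a nonempty finite set. -/
theorem CExpr.eval_nonempty : (e : CExpr) → e.eval.Nonempty
  | .leaf _ h => h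
  | .otimes l r => (l.eval_nonempty).add (r.eval_nonempty)
  | .oplus l _ => (l.eval_nonempty).mono Finset.subset_union_left

/-- Evaluating a count expression with each leaf set `X` replaced by the number `min X`,
each `⊗` node interpreted as addition of natural numbers, and each `⊕` node interpreted
as binary minimum. -/
def CExpr.minEval : CExpr → ℕ
  | .leaf X h => X.min' h
  | .otimes l r => l.minEval + r.minEval
  | .oplus l r => min l.minEval r.minEval

/-- For every count expression `e`, the minimum of `eval e` equals the
natural number obtained by evaluating `e` with each leaf set `X` replaced by `min X`,
each `⊗` node interpreted as `+` on `ℕ`, and each `⊕` node interpreted as binary `min`. -/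
theorem min_eval_cexpr (e : CExpr) : e.eval.min' e.eval_nonempty = e.minEval := by
  induction e with
  | leaf X h => rfl
  | otimes l r hl hr =>
    apply le_antisymm
    · refine Finset.min'_le _ _ ?_
      rw [CExpr.minEval, ← hl, ← hr]
      exact Finset.add_mem_add (Finset.min'_mem _ _) (Finset.min'_mem _ _)
    · refine Finset.le_min' _ _ _ fun y hy => ?_
      rw [CExpr.eval, Finset.mem_add] at hy
      obtain ⟨a, ha, b, hb, rfl⟩ := hy
      rw [CExpr.minEval, ← hl, ← hr]
      exact Nat.add_le_add (Finset.min'_le _ _ ha) (Finset.min'_le _ _ hb)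
  | oplus l r hl hr =>
    apply le_antisymm
    · rw [CExpr.minEval, le_min_iff, ← hl, ← hr]
      constructor <;> refine Finset.min'_le _ _ ?_ <;> simp [CExpr.eval, Finset.min'_mem]
    · refine Finset.le_min' _ _ _ fun y hy => ?_
      rw [CExpr.eval, Finset.mem_union] at hy
      rw [CExpr.minEval, ← hl, ← hr]
      rcases hy with h | h
      · exact min_le_of_left_le (Finset.min'_le _ _ h)
      · exact min_le_of_right_le (Finset.min'_le _ _ h)
end

section
/- For every count expression e, the maximum of eval(e) equals the natural number obtained by evaluating e with each leaf set X replaced by the number max X, each ⊗ node interpreted as addition of natural numbers, and each ⊕ node interpreted as binary maximum. (Consequently, for a requirement with exist count_exp where count_exp is ≤ N or < N, it suffices for each node of DVNet to propagate only the maximum of its counting set to its upstream neighbors: this is the sufficiency half of Proposition 1 for these cases.) -/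
open Pointwise

/-- Evaluating a count expression with each leaf set `X` replaced by the number `max X`,
each `⊗` node interpreted as addition of natural numbers, and each `⊕` node interpreted
as binary maximum. -/
def CExpr.maxEval : CExpr → ℕ
  | .leaf X h => X.max' h
  | .otimes l r => l.maxEval + r.maxEval
  | .oplus l r => max l.maxEval r.maxEval

/-- For every count expression `e`, the maximum of `eval e` equals the
natural number obtained by evaluating `e` with each leaf set `X` replaced by `max X`,
each `⊗` node interpreted as `+` on `ℕ`, and each `⊕` node interpreted as binary `max`. -/
theorem max_eval_cexpr (e : CExpr) : e.eval.max' e.eval_nonempty = e.maxEval := by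
  induction e with
  | leaf X h => rfl
  | otimes l r ihl ihr =>
    apply le_antisymm
    · apply Finset.max'_le
      intro y hy
      rw [CExpr.eval, Finset.mem_add] at hy
      obtain ⟨a, ha, b, hb, rfl⟩ := hy
      rw [CExpr.maxEval, ← ihl, ← ihr]
      exact Nat.add_le_add (Finset.le_max' _ _ ha) (Finset.le_max' _ _ hb)
    · rw [CExpr.maxEval, ← ihl, ← ihr]
      exact Finset.le_max' _ _ (Finset.add_mem_add (Finset.max'_mem _ _) (Finset.max'_mem _ _))
  | oplus l r ihl ihr =>
    apply le_antisymm
    · apply Finset.max'_le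
      intro y hy
      rw [CExpr.eval, Finset.mem_union] at hy
      rw [CExpr.maxEval, ← ihl, ← ihr]
      rcases hy with h | h
      · exact le_max_of_le_left (Finset.le_max' _ _ h)
      · exact le_max_of_le_right (Finset.le_max' _ _ h)
    · rw [CExpr.maxEval, ← ihl, ← ihr]
      apply max_le <;> apply Finset.le_max' <;>
        simp [CExpr.eval, Finset.max'_mem]
end

section
/- For every count expression e, take2(eval(e)) = take2(eval(e')), where e' is the count expression obtained from e by replacing each leaf set X with take2(X). (Consequently, for a requirement with exist count_exp where count_exp is == N, it suffices for each node of DVNet to propagate only the first min(|c_u|, 2) smallest elements of its counting set c_u to its upstream neighbors: this is the sufficiency half of Proposition 1 for this case.) -/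
/-!
An element of `A ∪ B` with fewer than `k` smaller elements has fewer than `k` smaller elements in
the part it belongs to, and if `a + b ∈ A + B` does, then so do `a` in `A` and `b` in `B`
(translate by `b`, resp. `a`). Hence the `k` smallest elements of `A ∪ B` (resp. `A + B`) lie in
`smallest k A ∪ smallest k B` (resp. `smallest k A + smallest k B`), and a set squeezed between
`smallest k T` and `T` has the same `k` smallest elements as `T`. Induction on the expression,
with `k = 2`, finishes the proof.
-/

open Pointwise

/-- For a finite set `X` of natural numbers, `take2 X` is the set of the `min(|X|, 2)`
smallest elements of `X`: the first two elements of `X` sorted in increasing order. -/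
def take2 (X : Finset ℕ) : Finset ℕ := ((X.sort (· ≤ ·)).take 2).toFinset

theorem take2_nonempty {X : Finset ℕ} (h : X.Nonempty) : (take2 X).Nonempty := by
  have hpos : 0 < X.card := Finset.card_pos.mpr h
  have hne : (X.sort (· ≤ ·)).take 2 ≠ [] := by
    intro hnil
    rcases List.take_eq_nil_iff.mp hnil with h2 | h2
    · exact two_ne_zero h2
    · have hc : X.card = 0 := by rw [← Finset.length_sort (· ≤ ·), h2]; rfl
      omega
  obtain ⟨y, hy⟩ := List.exists_mem_of_ne_nil _ hne
  exact ⟨y, List.mem_toFinset.mpr hy⟩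

/-- The count expression obtained by replacing each leaf set `X` with `take2 X`. -/
def CExpr.take2Leaves : CExpr → CExpr
  | .leaf X h => .leaf (take2 X) (take2_nonempty h)
  | .otimes l r => .otimes l.take2Leaves r.take2Leaves
  | .oplus l r => .oplus l.take2Leaves r.take2Leaves

namespace List

variable {α : Type*} [LinearOrder α]

theorem mem_take_iff_length_filter_lt {l : List α} (hl : l.Pairwise (· < ·)) {k : ℕ} {a : α} :
    a ∈ l.take k ↔ a ∈ l ∧ (l.filter (· < a)).length < k := by
  induction l generalizing k with
  | nil => simp
  | cons b l ih =>
    obtain ⟨hb, hl⟩ := pairwise_cons.mp hl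
    cases k with
    | zero => simp
    | succ k =>
      rw [take_succ_cons, mem_cons, mem_cons, ih hl]
      rcases eq_or_ne a b with rfl | hab
      · have : l.filter (· < a) = [] :=
          filter_eq_nil_iff.mpr fun x hx => by simpa using (hb x hx).le
        simp [this]
      · by_cases ha : a ∈ l
        · simp [hab, ha, hb a ha]
        · simp [hab, ha]

end List

namespace Finset

variable {α β : Type*} [LinearOrder α] [LinearOrder β] {s t : Finset α} {k : ℕ} {a : α}

def smallest (k : ℕ) (s : Finset α) : Finset α := (s.sort.take k).toFinset

theorem mem_smallest : a ∈ s.smallest k ↔ a ∈ s ∧ #{x ∈ s | x < a} < k := by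
  rw [smallest, List.mem_toFinset, List.mem_take_iff_length_filter_lt s.sortedLT_sort.pairwise,
    mem_sort, ← Multiset.coe_card, ← Multiset.filter_coe, sort_eq]
  rfl

theorem card_smallest : #(s.smallest k) = min k #s := by
  rw [smallest, List.toFinset_card_of_nodup ((sort_nodup _ _).sublist (List.take_sublist _ _)),
    List.length_take, length_sort]

theorem smallest_subset : s.smallest k ⊆ s := fun _ h => (mem_smallest.mp h).1

theorem mem_smallest_of_strictMono {u : Finset β} {f : α → β} (hf : StrictMono f)
    (hsu : Set.MapsTo f s u) (ha : a ∈ s) (h : f a ∈ u.smallest k) : a ∈ s.smallest k := by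
  refine mem_smallest.mpr ⟨ha, lt_of_le_of_lt ?_ (mem_smallest.mp h).2⟩
  refine card_le_card_of_injOn f (fun x hx => ?_) hf.injective.injOn
  obtain ⟨hxs, hxa⟩ := mem_filter.mp hx
  exact mem_filter.mpr ⟨hsu hxs, hf hxa⟩

theorem mem_smallest_of_subset (hst : s ⊆ t) (ha : a ∈ s) (h : a ∈ t.smallest k) :
    a ∈ s.smallest k :=
  mem_smallest_of_strictMono strictMono_id (fun _ hx => hst hx) ha h

theorem smallest_filter_lt_subset (a : α) : {x ∈ s | x < a}.smallest k ⊆ s.smallest k := by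
  intro x hx
  obtain ⟨hx, hcard⟩ := mem_smallest.mp hx
  obtain ⟨hxs, hxa⟩ := mem_filter.mp hx
  refine mem_smallest.mpr ⟨hxs, ?_⟩
  rwa [filter_filter,
    filter_congr fun y _ => and_iff_right_of_imp fun hyx => hyx.trans hxa] at hcard

theorem smallest_eq_of_subset (hst : s ⊆ t) (hts : t.smallest k ⊆ s) :
    s.smallest k = t.smallest k := by
  ext a
  refine ⟨fun ha => ?_, fun ha => mem_smallest_of_subset hst (hts ha) ha⟩
  obtain ⟨has, hlt⟩ := mem_smallest.mp ha
  refine mem_smallest.mpr ⟨hst has, ?_⟩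
  by_contra! hk
  -- the `k` smallest elements of `t` below `a` lie in `s`, so `s` has `k` elements below `a`
  have hsub : {x ∈ t | x < a}.smallest k ⊆ {x ∈ s | x < a} := fun x hx =>
    mem_filter.mpr ⟨hts (smallest_filter_lt_subset a hx), (mem_filter.mp (smallest_subset hx)).2⟩
  have := card_le_card hsub
  rw [card_smallest, min_eq_left hk] at this
  omega

theorem smallest_smallest : (s.smallest k).smallest k = s.smallest k :=
  smallest_eq_of_subset smallest_subset Subset.rfl

theorem smallest_union :
    (s ∪ t).smallest k = (s.smallest k ∪ t.smallest k).smallest k := by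
  refine (smallest_eq_of_subset (union_subset_union smallest_subset smallest_subset) ?_).symm
  intro a ha
  rcases mem_union.mp (smallest_subset ha) with has | hat
  · exact mem_union_left _ (mem_smallest_of_subset subset_union_left has ha)
  · exact mem_union_right _ (mem_smallest_of_subset subset_union_right hat ha)

theorem smallest_add [DecidableEq α] [Add α] [AddLeftStrictMono α] [AddRightStrictMono α] :
    (s + t).smallest k = (s.smallest k + t.smallest k).smallest k := by
  refine (smallest_eq_of_subset (add_subset_add smallest_subset smallest_subset) ?_).symm
  intro c hc
  obtain ⟨a, ha, b, hb, rfl⟩ := mem_add.mp (smallest_subset hc)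
  exact add_mem_add
    (mem_smallest_of_strictMono add_left_strictMono (fun _ hx => add_mem_add hx hb) ha hc)
    (mem_smallest_of_strictMono add_right_strictMono (fun _ hy => add_mem_add ha hy) hb hc)

end Finset

theorem take2_eq_smallest (X : Finset ℕ) : take2 X = X.smallest 2 := rfl

/-- For every count expression `e`,
`take2 (eval e) = take2 (eval e')`, where `e'` is obtained from `e` by replacing each leaf
set `X` with `take2 X`: the two smallest elements of the value of a count expression are
determined by the two smallest elements of each leaf set. -/
theorem take2_eval_cexpr (e : CExpr) : take2 e.eval = take2 e.take2Leaves.eval := by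
  simp only [take2_eq_smallest]
  induction e with
  | leaf => exact Finset.smallest_smallest.symm
  | otimes l r ihl ihr =>
    rw [CExpr.eval, CExpr.take2Leaves, CExpr.eval, Finset.smallest_add, ihl, ihr,
      ← Finset.smallest_add]
  | oplus l r ihl ihr =>
    rw [CExpr.eval, CExpr.take2Leaves, CExpr.eval, Finset.smallest_union, ihl, ihr,
      ← Finset.smallest_union]
end

section
/- Let (V, E) be a finite acyclic directed graph and d ∈ V. Then for every vertex u the set of walks from u to d is finite; letting N(u) denote its cardinality, N(d) = 1 (the trivial one-vertex walk is the only walk from d to d), and for every u ≠ d, N(u) equals the sum of N(v) over all v with E u v. This is the correctness of Coral's reverse-topological counting (Algorithm 1, Equation (1)) when all forwarding actions are ALL-type. -/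
/-- A walk from `u` to `w` in the directed graph with edge relation `E` is a nonempty list
of vertices starting at `u`, ending at `w`, with every consecutive pair related by `E`. -/
def IsWalk {V : Type*} (E : V → V → Prop) (u w : V) (l : List V) : Prop :=
  l ≠ [] ∧ l.head? = some u ∧ l.getLast? = some w ∧ l.Chain' E

/-! In an acyclic graph the vertices of a walk are pairwise related by the transitive closure
of `E`, hence distinct, so walks have length at most `|V|` and there are finitely many of them.
A walk from `u ≠ d` to `d` is `u` followed by a walk from an out-neighbour `v` of `u`, and the
head `v` of the tail determines the summand, which gives the recursion. -/

variable {V : Type*} {E : V → V → Prop} {u w : V} {l : List V}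

theorem List.IsChain.nodup_of_irreflexive_transGen (hE : Irreflexive (Relation.TransGen E))
    (h : l.IsChain E) : l.Nodup :=
  have : Std.Irrefl (Relation.TransGen E) := ⟨hE⟩
  (List.isChain_iff_pairwise.mp (h.imp fun _ _ => Relation.TransGen.single)).nodup

theorem IsWalk.nodup (hE : Irreflexive (Relation.TransGen E)) (h : IsWalk E u w l) :
    l.Nodup :=
  h.2.2.2.nodup_of_irreflexive_transGen hE

theorem finite_setOf_isWalk [Finite V] (hE : Irreflexive (Relation.TransGen E)) :
    {l | IsWalk E u w l}.Finite :=
  have := Fintype.ofFinite V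
  (List.finite_length_le V (Fintype.card V)).subset fun _ h => (h.nodup hE).length_le_card

theorem setOf_isWalk_self (hE : Irreflexive (Relation.TransGen E)) :
    {l | IsWalk E w w l} = {[w]} := by
  ext l
  refine ⟨fun h => ?_, ?_⟩
  · have hnodup := h.nodup hE
    obtain ⟨hne, hhead, hlast, -⟩ := h
    obtain ⟨a, t, rfl⟩ := List.exists_cons_of_ne_nil hne
    obtain rfl : w = a := (by simpa using hhead : a = w).symm
    rcases t with _ | ⟨b, t⟩
    · rfl
    · have hw : w ∈ b :: t :=
        List.mem_of_mem_getLast? (by rwa [List.getLast?_cons_cons] at hlast)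
      exact absurd hw (List.nodup_cons.mp hnodup).1
  · rintro rfl
    exact ⟨List.cons_ne_nil _ _, rfl, rfl, List.isChain_singleton w⟩

theorem isWalk_iff_exists_cons_of_ne (huw : u ≠ w) :
    IsWalk E u w l ↔ ∃ v t, E u v ∧ IsWalk E v w t ∧ l = u :: t := by
  constructor
  · rintro ⟨hne, hhead, hlast, hchain⟩
    obtain ⟨a, t, rfl⟩ := List.exists_cons_of_ne_nil hne
    obtain rfl : u = a := (by simpa using hhead : a = u).symm
    rcases t with _ | ⟨v, t⟩
    · exact absurd (by simpa using hlast) huw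
    · obtain ⟨huv, hchain⟩ := List.isChain_cons_cons.mp hchain
      rw [List.getLast?_cons_cons] at hlast
      exact ⟨v, v :: t, huv, ⟨List.cons_ne_nil _ _, rfl, hlast, hchain⟩, rfl⟩
  · rintro ⟨v, t, huv, ⟨hne, hhead, hlast, hchain⟩, rfl⟩
    obtain ⟨b, t, rfl⟩ := List.exists_cons_of_ne_nil hne
    obtain rfl : v = b := (by simpa using hhead : b = v).symm
    exact ⟨List.cons_ne_nil _ _, rfl, by rwa [List.getLast?_cons_cons],
      List.isChain_cons_cons.mpr ⟨huv, hchain⟩⟩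

theorem setOf_isWalk_eq_biUnion_of_ne (huw : u ≠ w) :
    {l | IsWalk E u w l} = ⋃ v ∈ {v | E u v}, List.cons u '' {t | IsWalk E v w t} := by
  ext l
  simp only [Set.mem_ofPred_eq, isWalk_iff_exists_cons_of_ne huw, Set.mem_iUnion,
    Set.mem_image, exists_prop]
  grind

theorem pairwiseDisjoint_image_cons_setOf_isWalk (s : Set V) :
    s.PairwiseDisjoint fun v => List.cons u '' {t | IsWalk E v w t} := by
  intro v _ v' _ hvv'
  refine Set.disjoint_left.mpr ?_
  rintro _ ⟨t, ht, rfl⟩ ⟨t', ht', heq⟩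
  obtain rfl : t' = t := List.cons_injective heq
  exact hvv' (Option.some.inj (ht.2.1.symm.trans ht'.2.1))

theorem ncard_setOf_isWalk_of_ne [Fintype V] [DecidableRel E] (huw : u ≠ w)
    (hfin : ∀ v, E u v → {t | IsWalk E v w t}.Finite) :
    {l | IsWalk E u w l}.ncard =
      ∑ v ∈ Finset.univ.filter (E u ·), {t | IsWalk E v w t}.ncard := by
  rw [setOf_isWalk_eq_biUnion_of_ne huw,
    (Set.toFinite {v | E u v}).ncard_biUnion (fun v hv => (hfin v hv).image _)
      (pairwiseDisjoint_image_cons_setOf_isWalk _),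
    ← Finset.coe_filter_univ, finsum_mem_coe_finset]
  exact Finset.sum_congr rfl fun v _ => Set.ncard_image_of_injective _ List.cons_injective

theorem walk_count_recursion_general {V : Type} [Fintype V]
    (E : V → V → Prop) [DecidableRel E]
    (hacyc : Irreflexive (Relation.TransGen E)) (d : V) :
    (∀ u : V, {l : List V | IsWalk E u d l}.Finite) ∧
    {l : List V | IsWalk E d d l}.ncard = 1 ∧
    (∀ u : V, u ≠ d →
      {l : List V | IsWalk E u d l}.ncard =
        ∑ v ∈ Finset.univ.filter (fun v => E u v),
          {l : List V | IsWalk E v d l}.ncard) :=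
  ⟨fun _ => finite_setOf_isWalk hacyc,
    by rw [setOf_isWalk_self hacyc, Set.ncard_singleton],
    fun _ hu => ncard_setOf_isWalk_of_ne hu fun _ _ => finite_setOf_isWalk hacyc⟩

/-- Let `(V, E)` be a finite acyclic directed graph and `d ∈ V`. Then for
every vertex `u` the set of walks from `u` to `d` is finite; letting `N u` denote its
cardinality, `N d = 1` (the trivial one-vertex walk is the only walk from `d` to `d`), and
for every `u ≠ d`, `N u` equals the sum of `N v` over all `v` with `E u v`. -/
theorem walk_count_recursion {V : Type} [Fintype V] [DecidableEq V]
    (E : V → V → Prop) [DecidableRel E]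
    (hacyc : Irreflexive (Relation.TransGen E)) (d : V) :
    (∀ u : V, {l : List V | IsWalk E u d l}.Finite) ∧
    {l : List V | IsWalk E d d l}.ncard = 1 ∧
    (∀ u : V, u ≠ d →
      {l : List V | IsWalk E u d l}.ncard =
        ∑ v ∈ Finset.univ.filter (fun v => E u v),
          {l : List V | IsWalk E v d l}.ncard) :=
  walk_count_recursion_general E hacyc d
end

section
/- Let (V, E) be a finite acyclic directed graph and d ∈ V a vertex with no outgoing edges, and for each u ≠ d let S(u) ⊆ {v | E u v}. A selection is a function σ assigning to each vertex u ≠ d with S(u) ≠ ∅ a vertex σ(u) ∈ S(u). For a selection σ and a vertex u, let f_σ(u) = 1 if the trajectory u, σ(u), σ(σ(u)), … (which terminates by acyclicity, stopping upon reaching d or a vertex u' ≠ d with S(u') = ∅) reaches d, and f_σ(u) = 0 otherwise. Let C : V → Finset ℕ be the function defined by the well-founded recursion C(d) = {1}, C(u) = {0} for u ≠ d with S(u) = ∅, and C(u) = ⋃_{v ∈ S(u)} C(v) for u ≠ d with S(u) ≠ ∅. Then for every vertex u, the set {f_σ(u) | σ a selection} equals C(u). This is the correctness of Coral's counting (Algorithm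 1, Equation (2)) when all forwarding actions are ANY-type: C(u) is exactly the set of numbers of copies delivered to d across all universes. -/
/-- `Reaches d S σ u` holds when the trajectory `u, σ u, σ (σ u), …` — which, at each
vertex `u' ≠ d` with `S u'` nonempty, moves to the selected next-hop `σ u'`, and stops upon
reaching `d` or a vertex `u' ≠ d` with `S u' = ∅` — reaches the destination `d`. -/
inductive Reaches {V : Type*} (d : V) (S : V → Finset V) (σ : V → V) : V → Prop where
  | base : Reaches d S σ d
  | step (u : V) : u ≠ d → (S u).Nonempty → Reaches d S σ (σ u) → Reaches d S σ u

open Classical in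
/-- `deliver d S σ u` is `f_σ(u)`: `1` if the trajectory of the selection `σ` starting
at `u` reaches `d`, and `0` otherwise. -/
noncomputable def deliver {V : Type*} (d : V) (S : V → Finset V) (σ : V → V) (u : V) : ℕ :=
  if Reaches d S σ u then 1 else 0

lemma reaches_congr {V : Type} (E : V → V → Prop) (d : V) (S : V → Finset V)
    (hS : ∀ u, u ≠ d → ∀ v ∈ S u, E u v)
    (σ σ' : V → V) (hσ : ∀ u', u' ≠ d → (S u').Nonempty → σ u' ∈ S u')
    {w : V} (h : Reaches d S σ w)
    (hag : ∀ x, Relation.ReflTransGen E w x → σ x = σ' x) : Reaches d S σ' w := by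
  induction h with
  | base => exact .base
  | step u hne hne2 _ ih =>
    have heq : σ u = σ' u := hag u .refl
    have hE : E u (σ u) := hS u hne (σ u) (hσ u hne hne2)
    refine .step u hne hne2 ?_
    rw [← heq]
    exact ih (fun x hx => hag x (.head hE hx))

/-- Let `(V, E)` be a finite acyclic directed graph, `d` a vertex with no
outgoing edges, and `S u ⊆ {v | E u v}` for each `u ≠ d`. A selection is a function `σ`
with `σ u ∈ S u` for each `u ≠ d` with `S u ≠ ∅`. Let `C : V → Finset ℕ` satisfy the
well-founded recursion `C d = {1}`, `C u = {0}` for `u ≠ d` with `S u = ∅`, and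
`C u = ⋃_{v ∈ S u} C v` for `u ≠ d` with `S u ≠ ∅`. Then for every vertex `u`, the set
`{f_σ(u) | σ a selection}` equals `C u`. -/
theorem any_counting_correct {V : Type} [Fintype V] [DecidableEq V]
    (E : V → V → Prop) (hacyc : Irreflexive (Relation.TransGen E))
    (d : V) (hd : ∀ v, ¬ E d v)
    (S : V → Finset V) (hS : ∀ u, u ≠ d → ∀ v ∈ S u, E u v)
    (C : V → Finset ℕ)
    (hCd : C d = {1})
    (hCdrop : ∀ u, u ≠ d → S u = ∅ → C u = {0})
    (hCrec : ∀ u, u ≠ d → (S u).Nonempty → C u = (S u).biUnion C) :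
    ∀ u : V,
      {n : ℕ | ∃ σ : V → V,
        (∀ u', u' ≠ d → (S u').Nonempty → σ u' ∈ S u') ∧ n = deliver d S σ u}
      = ↑(C u) := by
  classical
  -- canonical selection
  have hσ0 : ∃ σ0 : V → V, ∀ u', u' ≠ d → (S u').Nonempty → σ0 u' ∈ S u' :=
    ⟨fun u' => if h : (S u').Nonempty then h.choose else u',
     fun u' _ h => by simp only [dif_pos h]; exact h.choose_spec⟩
  obtain ⟨σ0, hσ0⟩ := hσ0
  haveI : IsTrans V (fun a b => Relation.TransGen E b a) := ⟨fun a b c h1 h2 => h2.trans h1⟩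
  haveI : IsIrrefl V (fun a b => Relation.TransGen E b a) := ⟨hacyc⟩
  have hwf : WellFounded (fun a b : V => E b a) :=
    Subrelation.wf (fun h => Relation.TransGen.single h)
      (Finite.wellFounded_of_trans_of_irrefl (fun a b : V => Relation.TransGen E b a))
  intro u
  induction u using WellFounded.induction hwf with
  | _ u IH => ?_
  by_cases hud : u = d
  · subst hud
    ext n
    simp only [Set.mem_setOf_eq, hCd, Finset.coe_singleton, Set.mem_singleton_iff]
    constructor
    · rintro ⟨σ, hσ, rfl⟩
      simp [deliver, Reaches.base]
    · rintro rfl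
      exact ⟨σ0, hσ0, by simp [deliver, Reaches.base]⟩
  by_cases hne : (S u).Nonempty
  · rw [hCrec u hud hne]
    ext n
    simp only [Set.mem_setOf_eq, Finset.mem_coe, Finset.mem_biUnion]
    constructor
    · rintro ⟨σ, hσ, rfl⟩
      have hmem : σ u ∈ S u := hσ u hud hne
      have hiff : Reaches d S σ u ↔ Reaches d S σ (σ u) := by
        constructor
        · intro h
          cases h with
          | base => exact absurd rfl hud
          | step _ _ _ h => exact h
        · exact fun h => .step u hud hne h
      have h1 : deliver d S σ u = deliver d S σ (σ u) := by simp [deliver, hiff]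
      have hx : deliver d S σ (σ u) ∈ {n : ℕ | ∃ τ : V → V,
          (∀ u', u' ≠ d → (S u').Nonempty → τ u' ∈ S u') ∧ n = deliver d S τ (σ u)} :=
        ⟨σ, hσ, rfl⟩
      rw [IH (σ u) (hS u hud _ hmem)] at hx
      have h2 : deliver d S σ (σ u) ∈ (↑(C (σ u)) : Set ℕ) := hx
      exact ⟨σ u, hmem, Finset.mem_coe.mp (by rw [h1]; exact h2)⟩
    · rintro ⟨v, hv, hnv⟩
      have hx : n ∈ (↑(C v) : Set ℕ) := Finset.mem_coe.mpr hnv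
      rw [← IH v (hS u hud v hv)] at hx
      simp only [Set.mem_setOf_eq] at hx
      obtain ⟨σ, hσ, rfl⟩ := hx
      set σ' := Function.update σ u v with hσ'def
      have hσ'u : σ' u = v := Function.update_self u v σ
      have hσ' : ∀ u', u' ≠ d → (S u').Nonempty → σ' u' ∈ S u' := by
        intro u' h1 h2
        by_cases h : u' = u
        · subst h; rw [hσ'u]; exact hv
        · rw [hσ'def, Function.update_of_ne h]; exact hσ u' h1 h2
      have hEuv : E u v := hS u hud v hv
      have hag : ∀ x, Relation.ReflTransGen E v x → σ x = σ' x := by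
        intro x hx
        have hxu : x ≠ u := fun hxe =>
          hacyc u (Relation.TransGen.head' hEuv (hxe ▸ hx))
        rw [hσ'def, Function.update_of_ne hxu]
      have hag' : ∀ x, Relation.ReflTransGen E v x → σ' x = σ x :=
        fun x hx => (hag x hx).symm
      have hiffv : Reaches d S σ v ↔ Reaches d S σ' v :=
        ⟨fun h => reaches_congr E d S hS σ σ' hσ h hag,
         fun h => reaches_congr E d S hS σ' σ hσ' h hag'⟩
      have hiffu : Reaches d S σ' u ↔ Reaches d S σ' v := by
        constructor
        · intro h
          cases h with
          | base => exact absurd rfl hud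
          | step _ _ _ h => rwa [hσ'u] at h
        · intro h
          exact .step u hud hne (by rwa [hσ'u])
      refine ⟨σ', hσ', ?_⟩
      simp only [deliver, hiffu, ← hiffv]
  · have hSe : S u = ∅ := Finset.not_nonempty_iff_eq_empty.mp hne
    ext n
    simp only [Set.mem_setOf_eq, hCdrop u hud hSe, Finset.coe_singleton,
      Set.mem_singleton_iff]
    have hnr : ∀ σ : V → V, ¬ Reaches d S σ u := by
      intro σ h
      cases h with
      | base => exact absurd rfl hud
      | step _ _ h2 _ => exact hne h2
    constructor
    · rintro ⟨σ, hσ, rfl⟩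
      simp [deliver, hnr σ]
    · rintro rfl
      exact ⟨σ0, hσ0, by simp [deliver, hnr σ0]⟩
end

section
/- Let (V, E) be a finite directed graph, M a DFA over alphabet V with state type Q, and s, d ∈ V. Then there exists a walk v₀, v₁, …, v_k from s to d in (V, E) whose vertex sequence [v₀, v₁, …, v_k] is accepted by M, if and only if there exist an accepting state q of M and a walk in the product graph from (s, M.step M.start s) to (d, q). This establishes that the product of the path-pattern automaton with the network topology (the construction of DVNet) exactly represents the network paths from s to d matching the regular expression. -/
/-- Given a directed graph `(V, E)` and a DFA `M` over alphabet `V`, the product graph has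
vertex set `V × Q` and an edge from `(u, p)` to `(v, q)` iff `E u v` and `M.step p v = q`. -/
def ProductEdge {V Q : Type*} (E : V → V → Prop) (M : DFA V Q) :
    V × Q → V × Q → Prop :=
  fun p r => E p.1 r.1 ∧ M.step p.2 r.1 = r.2

def liftWalk {V Q : Type*} (M : DFA V Q) : Q → List V → List (V × Q)
  | _, [] => []
  | q, v :: l => (v, M.step q v) :: liftWalk M (M.step q v) l

section liftWalk

variable {V Q : Type*} (E : V → V → Prop) (M : DFA V Q)

@[simp]
lemma liftWalk_eq_nil_iff (q : Q) (l : List V) : liftWalk M q l = [] ↔ l = [] := by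
  cases l <;> simp [liftWalk]

@[simp]
lemma head?_liftWalk (q : Q) (l : List V) :
    (liftWalk M q l).head? = l.head?.map fun v => (v, M.step q v) := by
  cases l <;> simp [liftWalk]

@[simp]
lemma getLast?_liftWalk (q : Q) (l : List V) :
    (liftWalk M q l).getLast? = l.getLast?.map fun v => (v, M.evalFrom q l) := by
  induction l generalizing q with
  | nil => rfl
  | cons v l ih =>
    cases l with
    | nil => rfl
    | cons w l =>
      simp only [liftWalk] at ih ⊢
      simp [List.getLast?_cons_cons, ih, DFA.evalFrom]

lemma isChain_liftWalk_iff (q : Q) (l : List V) :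
    (liftWalk M q l).IsChain (ProductEdge E M) ↔ l.IsChain E := by
  induction l generalizing q with
  | nil => simp [liftWalk]
  | cons v l ih =>
    cases l with
    | nil => simp [liftWalk]
    | cons w l =>
      simp only [liftWalk] at ih ⊢
      simp [List.isChain_cons_cons, ProductEdge, ih]

lemma eq_liftWalk_of_isChain (p : Q) (L : List (V × Q)) (hL : L.IsChain (ProductEdge E M))
    (hhead : ∀ x ∈ L.head?, M.step p x.1 = x.2) : L = liftWalk M p (L.map Prod.fst) := by
  induction L generalizing p with
  | nil => rfl
  | cons x L ih =>
    rw [List.isChain_cons] at hL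
    have hx : M.step p x.1 = x.2 := hhead x rfl
    simp only [List.map_cons, liftWalk, hx, ← ih x.2 hL.2 fun y hy => (hL.1 y hy).2]

lemma isWalk_liftWalk_iff (q q' : Q) (s d : V) (l : List V) :
    IsWalk (ProductEdge E M) (s, M.step q s) (d, q') (liftWalk M q l) ↔
      IsWalk E s d l ∧ M.evalFrom q l = q' := by
  simp only [IsWalk, List.Chain', isChain_liftWalk_iff, ne_eq, liftWalk_eq_nil_iff,
    head?_liftWalk, getLast?_liftWalk, Option.map_eq_some_iff, Prod.mk.injEq]
  constructor
  · rintro ⟨hne, ⟨_, hs, rfl, -⟩, ⟨_, hd, rfl, rfl⟩, hc⟩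
    exact ⟨⟨hne, hs, hd, hc⟩, rfl⟩
  · rintro ⟨⟨hne, hs, hd, hc⟩, rfl⟩
    exact ⟨hne, ⟨s, hs, rfl, rfl⟩, ⟨d, hd, rfl, rfl⟩, hc⟩

lemma eq_liftWalk_of_isWalk {q : Q} {s : V} {x : V × Q} {L : List (V × Q)}
    (hL : IsWalk (ProductEdge E M) (s, M.step q s) x L) :
    L = liftWalk M q (L.map Prod.fst) :=
  eq_liftWalk_of_isChain E M q L hL.2.2.2 fun y hy => by
    rw [hL.2.1, Option.mem_some_iff] at hy
    rw [← hy]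

end liftWalk

theorem dvnet_product_correct_general {V Q : Type}
    (E : V → V → Prop) (M : DFA V Q) (s d : V) :
    (∃ l : List V, IsWalk E s d l ∧ M.eval l ∈ M.accept) ↔
    (∃ q ∈ M.accept, ∃ l : List (V × Q),
      IsWalk (ProductEdge E M) (s, M.step M.start s) (d, q) l) := by
  constructor
  · rintro ⟨l, hl, hacc⟩
    exact ⟨_, hacc, _, (isWalk_liftWalk_iff E M _ _ s d l).2 ⟨hl, rfl⟩⟩
  · rintro ⟨q, hq, L, hL⟩
    rw [eq_liftWalk_of_isWalk E M hL, isWalk_liftWalk_iff] at hL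
    obtain ⟨hl, rfl⟩ := hL
    exact ⟨_, hl, hq⟩

/-- Let `(V, E)` be a finite directed graph, `M` a DFA over alphabet `V`
with state type `Q`, and `s, d ∈ V`. Then there exists a walk from `s` to `d` in `(V, E)`
whose vertex sequence is accepted by `M` iff there exist an accepting state `q` of `M` and
a walk in the product graph from `(s, M.step M.start s)` to `(d, q)`. -/
theorem dvnet_product_correct {V Q : Type} [Fintype V] [Fintype Q]
    (E : V → V → Prop) (M : DFA V Q) (s d : V) :
    (∃ l : List V, IsWalk E s d l ∧ M.eval l ∈ M.accept) ↔
    (∃ q ∈ M.accept, ∃ l : List (V × Q),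
      IsWalk (ProductEdge E M) (s, M.step M.start s) (d, q) l) :=
  dvnet_product_correct_general E M s d
end

section
/- Let (V, E) be a finite directed graph, M a DFA over alphabet V with state type Q, and s, d ∈ V. Then the projection map sending a product-graph walk (v₀, q₀), (v₁, q₁), …, (v_k, q_k) to its vertex sequence v₀, v₁, …, v_k is a bijection from the set of walks in the product graph that start at (s, M.step M.start s) and end at some vertex (d, q) with q an accepting state of M, onto the set of walks from s to d in (V, E) whose vertex sequence is accepted by M. Hence counting paths in DVNet (the product graph) is equivalent to counting network paths matching the regular expression. -/
/-!
The state component of a product walk starting at `(s, M.step M.start s)` is forced: it is the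
run of `M` on the projected vertex sequence, whose last state is `M.eval` of that sequence.
Hence projection is inverse to taking the run, and the product walk ends in an accepting state
exactly when its projection is accepted.
-/

namespace DFA

variable {α σ : Type*} (M : DFA α σ)

def run : σ → List α → List (α × σ)
  | _, [] => []
  | p, a :: w => (a, M.step p a) :: run (M.step p a) w

@[simp]
theorem map_fst_run : ∀ (p : σ) (w : List α), (M.run p w).map Prod.fst = w
  | _, [] => rfl
  | p, a :: w => by simp [run, map_fst_run (M.step p a) w]

@[simp]
theorem run_eq_nil_iff {p : σ} {w : List α} : M.run p w = [] ↔ w = [] := by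
  cases w <;> simp [run]

@[simp]
theorem head?_run (p : σ) (w : List α) :
    (M.run p w).head? = w.head?.map fun a => (a, M.step p a) := by
  cases w <;> rfl

@[simp]
theorem getLast?_run :
    ∀ (p : σ) (w : List α), (M.run p w).getLast? = w.getLast?.map fun a => (a, M.evalFrom p w)
  | _, [] => rfl
  | p, [a] => rfl
  | p, a :: b :: w => by
    have ih := getLast?_run (M.step p a) (b :: w)
    simp only [run] at ih ⊢
    rw [List.getLast?_cons_cons, ih]
    rfl

theorem isChain_run_iff {E : α → α → Prop} :
    ∀ (p : σ) (w : List α), (M.run p w).IsChain (ProductEdge E M) ↔ w.IsChain E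
  | _, [] => by simp [run]
  | p, [a] => by simp [run]
  | p, a :: b :: w => by
    have ih := isChain_run_iff (E := E) (M.step p a) (b :: w)
    simp only [run] at ih ⊢
    simp [List.isChain_cons_cons, ProductEdge, ih]

theorem run_map_fst_of_isChain :
    ∀ {p : σ} {l : List (α × σ)}, (∀ x ∈ l.head?, M.step p x.1 = x.2) →
      l.IsChain (fun x y => M.step x.2 y.1 = y.2) → M.run p (l.map Prod.fst) = l
  | _, [], _, _ => rfl
  | p, (a, q) :: l, hhead, hchain => by
    obtain rfl : M.step p a = q := hhead _ rfl
    refine congrArg _ (run_map_fst_of_isChain ?_ hchain.tail)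
    cases l with
    | nil => simp
    | cons y l => simpa using (List.isChain_cons_cons.mp hchain).1

theorem isWalk_run_iff {E : α → α → Prop} {p q : σ} {s d : α} {w : List α} :
    IsWalk (ProductEdge E M) (s, M.step p s) (d, q) (M.run p w) ↔
      IsWalk E s d w ∧ M.evalFrom p w = q := by
  simp only [IsWalk, List.Chain', isChain_run_iff, ne_eq, run_eq_nil_iff, head?_run, getLast?_run,
    Option.map_eq_some_iff, Prod.mk.injEq, ↓existsAndEq, and_self, and_true, true_and]
  tauto

theorem run_map_fst_of_isWalk {E : α → α → Prop} {p : σ} {s : α} {x : α × σ}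
    {l : List (α × σ)} (h : IsWalk (ProductEdge E M) (s, M.step p s) x l) :
    M.run p (l.map Prod.fst) = l :=
  M.run_map_fst_of_isChain (by simp [h.2.1]) (h.2.2.2.imp fun _ _ hxy => hxy.2)

end DFA

theorem dvnet_product_bijection_general {V Q : Type}
    (E : V → V → Prop) (M : DFA V Q) (s d : V) :
    Set.BijOn (fun l : List (V × Q) => l.map Prod.fst)
      {l : List (V × Q) | ∃ q ∈ M.accept,
        IsWalk (ProductEdge E M) (s, M.step M.start s) (d, q) l}
      {l : List V | IsWalk E s d l ∧ M.eval l ∈ M.accept} := by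
  refine Set.InvOn.bijOn
    ⟨fun l ⟨_, _, hl⟩ => M.run_map_fst_of_isWalk hl, fun w _ => M.map_fst_run M.start w⟩ ?_ ?_
  · rintro l ⟨q, hq, hl⟩
    rw [← M.run_map_fst_of_isWalk hl] at hl
    obtain ⟨hw, rfl⟩ := M.isWalk_run_iff.1 hl
    exact ⟨hw, hq⟩
  · rintro w ⟨hw, hacc⟩
    exact ⟨M.eval w, hacc, M.isWalk_run_iff.2 ⟨hw, rfl⟩⟩

/-- Let `(V, E)` be a finite directed graph, `M` a DFA over alphabet `V`
with state type `Q`, and `s, d ∈ V`. The projection map sending a product-graph walk to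
its sequence of first components is a bijection from the set of walks in the product graph
starting at `(s, M.step M.start s)` and ending at some `(d, q)` with `q` accepting, onto
the set of walks from `s` to `d` in `(V, E)` whose vertex sequence is accepted by `M`. -/
theorem dvnet_product_bijection {V Q : Type} [Fintype V] [Fintype Q]
    (E : V → V → Prop) (M : DFA V Q) (s d : V) :
    Set.BijOn (fun l : List (V × Q) => l.map Prod.fst)
      {l : List (V × Q) | ∃ q ∈ M.accept,
        IsWalk (ProductEdge E M) (s, M.step M.start s) (d, q) l}
      {l : List V | IsWalk E s d l ∧ M.eval l ∈ M.accept} :=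
  dvnet_product_bijection_general E M s d
end

section
/- Let (V, E) be a finite directed graph and s, d ∈ V such that every edge of E lies on some walk from s to d, and let F be a sub-relation of E (i.e., F u v implies E u v for all u, v). Then the set of walks from s to d in (V, F) equals the set of walks from s to d in (V, E) if and only if F = E. Consequently, verifying an equivalence (equal-operator) requirement — that the data plane provides exactly all the s-to-d paths of DVNet — reduces to each device locally checking that it forwards to all the required next-hops, with no counting information exchanged: the minimal counting information of every node is the empty set, and Azure RCDC's local contracts for all-shortest-path availability are a special case. -/
/-- Let `(V, E)` be a finite directed graph and `s, d ∈ V` such that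
every edge of `E` lies on some walk from `s` to `d`, and let `F` be a sub-relation of `E`.
Then the set of walks from `s` to `d` in `(V, F)` equals the set of walks from `s` to `d`
in `(V, E)` if and only if `F = E`. -/
theorem equal_requirement_local {V : Type} [Fintype V]
    (E F : V → V → Prop) (s d : V)
    (hcover : ∀ u v : V, E u v → ∃ l : List V, IsWalk E s d l ∧ [u, v] <:+: l)
    (hsub : ∀ u v : V, F u v → E u v) :
    {l : List V | IsWalk F s d l} = {l : List V | IsWalk E s d l} ↔ F = E := by
  constructor
  · intro hset
    funext u v
    apply propext
    constructor
    · exact hsub u v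
    · intro hE
      obtain ⟨l, hl, hinf⟩ := hcover u v hE
      have hF : IsWalk F s d l := by
        have : l ∈ {l : List V | IsWalk E s d l} := hl
        rwa [← hset] at this
      have hchain : List.Chain' F [u, v] := hF.2.2.2.infix hinf
      exact (List.isChain_cons_cons.mp hchain).1
  · rintro rfl
    rfl
end
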